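/- arXiv:2210.11626 — 5 statements merged into one kernel-verified Lean document; each statement's English description precedes it below -/
import Mathlib

section
/- Fix γ > 0 and m ∈ ℕ₀. There exist constants c, C > 0 such that for every λ ∈ (0, 1/2], c · (log(1/λ))^{2m+1} ≤ ∑_{i=1}^∞ i^{2m} e^{-2γi} / (λ + e^{-2γi}) ≤ C · (log(1/λ))^{2m+1}. In particular the series converges for every λ > 0. -/
private lemma half_block (m M : ℕ) :
    ((M:ℝ)/2)^(2*m+1) ≤ ∑ i ∈ Finset.range M, ((i:ℝ)+1)^(2*m) := by
  have hsub : Finset.Ico (M/2) M ⊆ Finset.range M := by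
    intro i hi; simp only [Finset.mem_Ico] at hi; exact Finset.mem_range.mpr hi.2
  have h1 : ∑ i ∈ Finset.Ico (M/2) M, ((i:ℝ)+1)^(2*m) ≤ ∑ i ∈ Finset.range M, ((i:ℝ)+1)^(2*m) :=
    Finset.sum_le_sum_of_subset_of_nonneg hsub (fun i _ _ => by positivity)
  have h2 : (Finset.Ico (M/2) M).card • ((M:ℝ)/2)^(2*m) ≤
      ∑ i ∈ Finset.Ico (M/2) M, ((i:ℝ)+1)^(2*m) := by
    apply Finset.card_nsmul_le_sum
    intro i hi
    simp only [Finset.mem_Ico] at hi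
    apply pow_le_pow_left₀ (by positivity)
    have : M ≤ 2*i + 2 := by omega
    have : (M:ℝ) ≤ 2*(i:ℝ) + 2 := by exact_mod_cast this
    linarith
  have hcard : ((M:ℝ)/2) ≤ ((Finset.Ico (M/2) M).card : ℝ) := by
    rw [Nat.card_Ico]
    have : M ≤ 2 * (M - M/2) := by omega
    have : (M:ℝ) ≤ 2 * ((M - M/2 : ℕ) : ℝ) := by exact_mod_cast this
    linarith
  calc ((M:ℝ)/2)^(2*m+1) = ((M:ℝ)/2) * ((M:ℝ)/2)^(2*m) := by ring
    _ ≤ ((Finset.Ico (M/2) M).card : ℝ) * ((M:ℝ)/2)^(2*m) := by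
        apply mul_le_mul_of_nonneg_right hcard (by positivity)
    _ ≤ ∑ i ∈ Finset.Ico (M/2) M, ((i:ℝ)+1)^(2*m) := by
        rw [← nsmul_eq_mul]; exact h2
    _ ≤ _ := h1

private lemma summable_g (γ : ℝ) (hγ : 0 < γ) (m : ℕ) :
    Summable fun i : ℕ => ((i:ℝ)+1)^(2*m) * Real.exp (-2*γ*((i:ℝ)+1)) := by
  have hr : ‖Real.exp (-2*γ)‖ < 1 := by
    rw [Real.norm_eq_abs, abs_of_pos (Real.exp_pos _)]
    exact Real.exp_lt_one_iff.mpr (by nlinarith)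
  have h := summable_pow_mul_geometric_of_norm_lt_one (2*m) hr
  have h2 := (summable_nat_add_iff (f := fun n : ℕ => (n:ℝ)^(2*m) * Real.exp (-2*γ)^n) 1).mpr h
  apply h2.congr
  intro i
  rw [← Real.exp_nat_mul]
  push_cast
  ring_nf

set_option maxHeartbeats 1000000 in
/-- For fixed `γ > 0` and `m ∈ ℕ₀`, the `m`-th order effective dimension
`∑_{i=1}^∞ i^{2m} e^{-2γi}/(λ + e^{-2γi})` (a convergent series for every `λ > 0`)
is of exact order `(log(1/λ))^{2m+1}` uniformly over `λ ∈ (0, 1/2]`. -/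
theorem effective_dimension_exponential_eigenvalues (γ : ℝ) (hγ : 0 < γ) (m : ℕ) :
    (∀ lam : ℝ, 0 < lam →
      Summable fun i : ℕ =>
        ((i : ℝ) + 1) ^ (2 * m) * Real.exp (-2 * γ * ((i : ℝ) + 1)) /
          (lam + Real.exp (-2 * γ * ((i : ℝ) + 1)))) ∧
    ∃ c C : ℝ, 0 < c ∧ 0 < C ∧ ∀ lam : ℝ, 0 < lam → lam ≤ 1 / 2 →
      c * Real.log (1 / lam) ^ (2 * m + 1) ≤
        (∑' i : ℕ, ((i : ℝ) + 1) ^ (2 * m) * Real.exp (-2 * γ * ((i : ℝ) + 1)) /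
          (lam + Real.exp (-2 * γ * ((i : ℝ) + 1)))) ∧
      (∑' i : ℕ, ((i : ℝ) + 1) ^ (2 * m) * Real.exp (-2 * γ * ((i : ℝ) + 1)) /
          (lam + Real.exp (-2 * γ * ((i : ℝ) + 1)))) ≤
        C * Real.log (1 / lam) ^ (2 * m + 1) := by
  have hg := summable_g γ hγ m
  set g : ℕ → ℝ := fun i => ((i:ℝ)+1)^(2*m) * Real.exp (-2*γ*((i:ℝ)+1)) with hgdef
  set S : ℝ := ∑' i, g i with hSdef
  have hS0 : 0 ≤ S := tsum_nonneg (fun i => by positivity)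
  -- summability
  have hsumm : ∀ lam : ℝ, 0 < lam →
      Summable (fun i : ℕ => ((i : ℝ) + 1) ^ (2 * m) * Real.exp (-2 * γ * ((i : ℝ) + 1)) /
          (lam + Real.exp (-2 * γ * ((i : ℝ) + 1)))) := by
    intro lam hlam
    refine Summable.of_nonneg_of_le (fun i => by positivity) ?_ (hg.div_const lam)
    intro i
    have he : (0:ℝ) < Real.exp (-2*γ*((i:ℝ)+1)) := Real.exp_pos _
    simp only [hgdef]
    gcongr
    linarith
  refine ⟨hsumm, (1/2) * (1/(8*γ))^(2*m+1) ⊓ (2/3)*Real.exp (-2*γ) / (4*γ)^(2*m+1),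
    (1+S) * (1/(2*γ)+3)^(2*m+1), ?_, by positivity, ?_⟩
  · apply lt_min (by positivity) (by positivity)
  intro lam hlam hlam2
  set f : ℕ → ℝ := fun i => ((i : ℝ) + 1) ^ (2 * m) * Real.exp (-2 * γ * ((i : ℝ) + 1)) /
          (lam + Real.exp (-2 * γ * ((i : ℝ) + 1))) with hfdef
  have hf0 : ∀ i, 0 ≤ f i := fun i => by positivity
  set L : ℝ := Real.log (1/lam) with hLdef
  have hL2 : Real.log 2 ≤ L := by
    apply Real.log_le_log (by norm_num)
    rw [le_div_iff₀ hlam]; linarith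
  have hlog2 : (0.6931:ℝ) < Real.log 2 := by
    have := Real.log_two_gt_d9; linarith
  have hL0 : 0 < L := by linarith
  have hexpL : Real.exp (-L) = lam := by
    rw [hLdef, Real.exp_neg, Real.exp_log (by positivity)]
    simp
  constructor
  · -- LOWER BOUND
    have key : ∀ M : ℕ, (∀ i < M, lam ≤ Real.exp (-2*γ*((i:ℝ)+1))) →
        (1/2) * ∑ i ∈ Finset.range M, ((i:ℝ)+1)^(2*m) ≤ ∑' i, f i := by
      intro M hM
      have h1 : ∑ i ∈ Finset.range M, f i ≤ ∑' i, f i :=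
        Summable.sum_le_tsum _ (fun i _ => hf0 i) (hsumm lam hlam)
      refine le_trans ?_ h1
      rw [Finset.mul_sum]
      apply Finset.sum_le_sum
      intro i hi
      have hle := hM i (Finset.mem_range.mp hi)
      have he : (0:ℝ) < Real.exp (-2*γ*((i:ℝ)+1)) := Real.exp_pos _
      rw [hfdef]
      simp only
      rw [mul_comm (1/2), mul_div_assoc]
      apply mul_le_mul_of_nonneg_left ?_ (by positivity)
      rw [le_div_iff₀ (by linarith)]
      linarith
    by_cases hcase : 4*γ ≤ L
    · -- main case
      set M : ℕ := ⌊L/(2*γ)⌋₊ with hMdef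
      have hM2 : (2:ℝ) ≤ L/(2*γ) := by
        rw [le_div_iff₀ (by linarith)]; linarith
      have hMfl : (M:ℝ) ≤ L/(2*γ) := Nat.floor_le (by positivity)
      have hMlb : L/(4*γ) ≤ (M:ℝ) := by
        have h1 : L/(2*γ) - 1 < (M:ℝ) := by
          have := Nat.lt_floor_add_one (L/(2*γ)); linarith
        have h2 : (1:ℝ) ≤ L/(4*γ) := by rw [le_div_iff₀ (by linarith)]; linarith
        have h3 : L/(2*γ) = 2 * (L/(4*γ)) := by field_simp; ring
        linarith
      have hM : ∀ i < M, lam ≤ Real.exp (-2*γ*((i:ℝ)+1)) := by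
        intro i hi
        rw [← hexpL]
        apply Real.exp_le_exp.mpr
        have : (i:ℝ) + 1 ≤ (M:ℝ) := by exact_mod_cast Nat.succ_le_of_lt hi
        have : 2*γ*((i:ℝ)+1) ≤ 2*γ*(M:ℝ) := by nlinarith
        have : 2*γ*(M:ℝ) ≤ L := by
          rw [le_div_iff₀ (by linarith : (0:ℝ) < 2*γ)] at hMfl; linarith [hMfl]
        nlinarith
      have hblock := half_block m M
      have hkey := key M hM
      have hpow : (L/(8*γ))^(2*m+1) ≤ ((M:ℝ)/2)^(2*m+1) := by
        apply pow_le_pow_left₀ (by positivity)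
        have : L/(8*γ) = (L/(4*γ))/2 := by ring
        rw [this]; linarith
      have heq : (1/2) * (1/(8*γ))^(2*m+1) * L^(2*m+1) = (1/2) * (L/(8*γ))^(2*m+1) := by
        rw [div_eq_mul_one_div L (8*γ), mul_pow]; ring
      calc (min ((1/2) * (1/(8*γ))^(2*m+1)) ((2/3)*Real.exp (-2*γ) / (4*γ)^(2*m+1))) * L^(2*m+1)
          ≤ (1/2) * (1/(8*γ))^(2*m+1) * L^(2*m+1) := by
            apply mul_le_mul_of_nonneg_right (min_le_left _ _) (by positivity)
        _ = (1/2) * (L/(8*γ))^(2*m+1) := heq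
        _ ≤ (1/2) * ((M:ℝ)/2)^(2*m+1) := by linarith
        _ ≤ (1/2) * ∑ i ∈ Finset.range M, ((i:ℝ)+1)^(2*m) := by linarith
        _ ≤ ∑' i, f i := hkey
    · -- small L case: L < 4γ
      push_neg at hcase
      have h01 : f 0 ≤ ∑' i, f i := by
        have := Summable.sum_le_tsum (Finset.range 1) (fun i _ => hf0 i) (hsumm lam hlam)
        simpa using this
      have hf0' : (2/3) * Real.exp (-2*γ) ≤ f 0 := by
        rw [hfdef]
        simp only [Nat.cast_zero, zero_add, one_pow, one_mul, mul_one]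
        have he1 : Real.exp (-2*γ) ≤ 1 := Real.exp_le_one_iff.mpr (by nlinarith)
        have he0 : (0:ℝ) < Real.exp (-2*γ) := Real.exp_pos _
        rw [le_div_iff₀ (by linarith)]
        nlinarith
      calc (min ((1/2) * (1/(8*γ))^(2*m+1)) ((2/3)*Real.exp (-2*γ) / (4*γ)^(2*m+1))) * L^(2*m+1)
          ≤ ((2/3)*Real.exp (-2*γ) / (4*γ)^(2*m+1)) * L^(2*m+1) := by
            apply mul_le_mul_of_nonneg_right (min_le_right _ _) (by positivity)
        _ ≤ ((2/3)*Real.exp (-2*γ) / (4*γ)^(2*m+1)) * (4*γ)^(2*m+1) := by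
            apply mul_le_mul_of_nonneg_left ?_ (by positivity)
            exact pow_le_pow_left₀ (le_of_lt hL0) (le_of_lt hcase) _
        _ = (2/3)*Real.exp (-2*γ) := by field_simp
        _ ≤ f 0 := hf0'
        _ ≤ ∑' i, f i := h01
  · -- UPPER BOUND
    set N : ℕ := ⌈L/(2*γ)⌉₊ with hNdef
    have hN1 : 1 ≤ N := Nat.one_le_iff_ne_zero.mpr (by
      simp only [hNdef, ne_eq, Nat.ceil_eq_zero, not_le]
      positivity)
    have hNL : L ≤ 2*γ*(N:ℝ) := by
      have := Nat.le_ceil (L/(2*γ))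
      rw [div_le_iff₀ (by linarith)] at this
      linarith
    have hexpN : Real.exp (-(2*γ)*(N:ℝ)) ≤ lam := by
      rw [← hexpL]; exact Real.exp_le_exp.mpr (by linarith)
    have hsplit := Summable.sum_add_tsum_nat_add N (hsumm lam hlam)
    -- head bound
    have hhead : ∑ i ∈ Finset.range N, f i ≤ (N:ℝ)^(2*m+1) := by
      calc ∑ i ∈ Finset.range N, f i ≤ ∑ i ∈ Finset.range N, (N:ℝ)^(2*m) := by
            apply Finset.sum_le_sum
            intro i hi
            have he : (0:ℝ) < Real.exp (-2*γ*((i:ℝ)+1)) := Real.exp_pos _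
            have h1 : f i ≤ ((i:ℝ)+1)^(2*m) := by
              rw [hfdef]
              simp only
              rw [div_le_iff₀ (by linarith)]
              nlinarith [pow_nonneg (by positivity : (0:ℝ) ≤ (i:ℝ)+1) (2*m), he, hlam]
            have h2 : ((i:ℝ)+1)^(2*m) ≤ (N:ℝ)^(2*m) := by
              apply pow_le_pow_left₀ (by positivity)
              have : i + 1 ≤ N := Finset.mem_range.mp hi
              exact_mod_cast this
            linarith
        _ = (N:ℝ) * (N:ℝ)^(2*m) := by rw [Finset.sum_const, Finset.card_range, nsmul_eq_mul]
        _ = (N:ℝ)^(2*m+1) := by ring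
    -- tail bound
    have htail : ∑' i, f (i + N) ≤ ((N:ℝ)+1)^(2*m) * S := by
      have hb : ∀ i : ℕ, f (i + N) ≤ ((N:ℝ)+1)^(2*m) * g i := by
        intro i
        have hE : Real.exp (-2*γ*(((i+N:ℕ):ℝ)+1)) =
            Real.exp (-2*γ*((i:ℝ)+1)) * Real.exp (-(2*γ)*(N:ℝ)) := by
          rw [← Real.exp_add]; push_cast; ring_nf
        have he : (0:ℝ) < Real.exp (-2*γ*(((i+N:ℕ):ℝ)+1)) := Real.exp_pos _
        have hei : (0:ℝ) < Real.exp (-2*γ*((i:ℝ)+1)) := Real.exp_pos _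
        have hEle : Real.exp (-2*γ*(((i+N:ℕ):ℝ)+1)) ≤ lam * Real.exp (-2*γ*((i:ℝ)+1)) := by
          rw [hE]
          calc Real.exp (-2*γ*((i:ℝ)+1)) * Real.exp (-(2*γ)*(N:ℝ))
              ≤ Real.exp (-2*γ*((i:ℝ)+1)) * lam := by
                apply mul_le_mul_of_nonneg_left hexpN (le_of_lt hei)
            _ = lam * Real.exp (-2*γ*((i:ℝ)+1)) := by ring
        have hpoly : (((i+N:ℕ):ℝ)+1)^(2*m) ≤ ((N:ℝ)+1)^(2*m) * ((i:ℝ)+1)^(2*m) := by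
          rw [← mul_pow]
          apply pow_le_pow_left₀ (by positivity)
          push_cast
          nlinarith [Nat.cast_nonneg (α := ℝ) i, Nat.cast_nonneg (α := ℝ) N]
        rw [hfdef]
        simp only
        rw [div_le_iff₀ (by positivity)]
        calc (((i+N:ℕ):ℝ)+1)^(2*m) * Real.exp (-2*γ*(((i+N:ℕ):ℝ)+1))
            ≤ (((i+N:ℕ):ℝ)+1)^(2*m) * (lam * Real.exp (-2*γ*((i:ℝ)+1))) := by
              apply mul_le_mul_of_nonneg_left hEle (by positivity)
          _ ≤ (((N:ℝ)+1)^(2*m) * ((i:ℝ)+1)^(2*m)) * (lam * Real.exp (-2*γ*((i:ℝ)+1))) := by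
              apply mul_le_mul_of_nonneg_right hpoly (by positivity)
          _ = ((N:ℝ)+1)^(2*m) * g i * lam := by rw [hgdef]; ring
          _ ≤ ((N:ℝ)+1)^(2*m) * g i * (lam + Real.exp (-2*γ*(((i+N:ℕ):ℝ)+1))) := by
              have hgi : (0:ℝ) ≤ g i := by rw [hgdef]; positivity
              have hpre : (0:ℝ) ≤ ((N:ℝ)+1)^(2*m) * g i := by positivity
              exact mul_le_mul_of_nonneg_left (by linarith) hpre
      calc ∑' i, f (i + N) ≤ ∑' i, ((N:ℝ)+1)^(2*m) * g i := by
            apply Summable.tsum_le_tsum hb ((hsumm lam hlam).comp_injective (add_left_injective N))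
            exact hg.mul_left _
        _ = ((N:ℝ)+1)^(2*m) * S := by rw [tsum_mul_left]
    have hNbound : (N:ℝ)+1 ≤ (1/(2*γ)+3) * L := by
      have hceil : (N:ℝ) < L/(2*γ) + 1 := Nat.ceil_lt_add_one (by positivity)
      have h23 : (2:ℝ) ≤ 3 * L := by nlinarith
      have : L/(2*γ) = L * (1/(2*γ)) := by ring
      nlinarith [hceil]
    have hNpos : (0:ℝ) < (N:ℝ)+1 := by positivity
    have hfin : ∑' i, f i ≤ (1+S) * ((N:ℝ)+1)^(2*m+1) := by
      rw [← hsplit]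
      have h1 : (N:ℝ)^(2*m+1) ≤ ((N:ℝ)+1)^(2*m+1) :=
        pow_le_pow_left₀ (Nat.cast_nonneg _) (by linarith) _
      have h2 : ((N:ℝ)+1)^(2*m) * S ≤ ((N:ℝ)+1)^(2*m+1) * S := by
        apply mul_le_mul_of_nonneg_right ?_ hS0
        apply pow_le_pow_right₀ (by linarith) (by omega)
      nlinarith [hhead, htail]
    calc ∑' i, f i ≤ (1+S) * ((N:ℝ)+1)^(2*m+1) := hfin
      _ ≤ (1+S) * ((1/(2*γ)+3) * L)^(2*m+1) := by
          apply mul_le_mul_of_nonneg_left (pow_le_pow_left₀ (by linarith) hNbound _) (by linarith)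
      _ = (1+S) * (1/(2*γ)+3)^(2*m+1) * L^(2*m+1) := by rw [mul_pow]; ring
end

section
/- Fix m ∈ ℕ₀ and α > m + 1/2. There exist constants c, C > 0 such that for every λ ∈ (0, 1], c · λ^{-(2m+1)/(2α)} ≤ ∑_{i=1}^∞ i^{2m} · i^{-2α} / (λ + i^{-2α}) ≤ C · λ^{-(2m+1)/(2α)}. In particular the series converges for every λ > 0 when α > m + 1/2. -/
private lemma sum_pow_lower (m n : ℕ) : ((n : ℝ) / 2) ^ (2 * m + 1) ≤ ∑ i ∈ Finset.range n, ((i : ℝ) + 1) ^ (2 * m) := by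
  have h1 : ∀ i ∈ Finset.Ico (n / 2) n, ((n : ℝ) / 2) ^ (2 * m) ≤ ((i : ℝ) + 1) ^ (2 * m) := by
    intro i hi
    have hi' := (Finset.mem_Ico.mp hi).1
    have h2 : n ≤ 2 * (n / 2) + 1 := by omega
    have h2' : (n : ℝ) ≤ 2 * ((n / 2 : ℕ) : ℝ) + 1 := by exact_mod_cast h2
    have h3 : ((n / 2 : ℕ) : ℝ) ≤ (i : ℝ) := by exact_mod_cast hi'
    exact pow_le_pow_left₀ (by positivity) (by linarith) _
  have hcard : ((n : ℝ) / 2) ≤ (((Finset.Ico (n / 2) n).card : ℕ) : ℝ) := by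
    rw [Nat.card_Ico]
    have h4 : n ≤ 2 * (n - n / 2) := by omega
    have h4' : (n : ℝ) ≤ 2 * ((n - n / 2 : ℕ) : ℝ) := by exact_mod_cast h4
    linarith
  calc ((n : ℝ) / 2) ^ (2 * m + 1) = ((n : ℝ) / 2) * ((n : ℝ) / 2) ^ (2 * m) := by ring
    _ ≤ (((Finset.Ico (n / 2) n).card : ℕ) : ℝ) * ((n : ℝ) / 2) ^ (2 * m) :=
        mul_le_mul_of_nonneg_right hcard (by positivity)
    _ ≤ ∑ i ∈ Finset.Ico (n / 2) n, ((i : ℝ) + 1) ^ (2 * m) := by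
        rw [← nsmul_eq_mul]
        exact Finset.card_nsmul_le_sum _ _ _ h1
    _ ≤ ∑ i ∈ Finset.range n, ((i : ℝ) + 1) ^ (2 * m) := by
        apply Finset.sum_le_sum_of_subset_of_nonneg
        · rw [Finset.range_eq_Ico]
          exact Finset.Ico_subset_Ico (Nat.zero_le _) le_rfl
        · intros; positivity

private lemma tail_rpow_bound {s : ℝ} (hs : 1 < s) (n : ℕ) (hn : 1 ≤ n) :
    ∑' i : ℕ, ((n : ℝ) + (i : ℝ) + 1) ^ (-s) ≤ (n : ℝ) ^ (1 - s) / (s - 1) := by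
  have hn0 : (0 : ℝ) < n := by exact_mod_cast hn
  apply Real.tsum_le_of_sum_range_le
  · intro i; positivity
  · intro k
    have hanti : AntitoneOn (fun x : ℝ => x ^ (-s)) (Set.Icc (n : ℝ) ((n : ℝ) + k)) := by
      intro x hx y hy hxy
      exact Real.rpow_le_rpow_of_nonpos (lt_of_lt_of_le hn0 hx.1) hxy (by linarith)
    have hineq := hanti.sum_le_integral
    have hint : ∫ x in (n : ℝ)..((n : ℝ) + k), x ^ (-s)
        = (((n : ℝ) + k) ^ (1 - s) - (n : ℝ) ^ (1 - s)) / (1 - s) := by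
      rw [integral_rpow (Or.inr ⟨by intro h; linarith,
        Set.notMem_uIcc_of_lt hn0 (by positivity)⟩)]
      have : -s + 1 = 1 - s := by ring
      rw [this]
    have hpos : (0 : ℝ) ≤ ((n : ℝ) + k) ^ (1 - s) := by positivity
    have hsum : ∑ i ∈ Finset.range k, ((n : ℝ) + (i : ℝ) + 1) ^ (-s)
        = ∑ i ∈ Finset.range k, (fun x : ℝ => x ^ (-s)) ((n : ℝ) + ((i : ℕ) + 1 : ℕ)) := by
      apply Finset.sum_congr rfl
      intro i _
      push_cast
      ring_nf
    rw [hsum]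
    refine le_trans hineq ?_
    rw [hint]
    have key : (((n : ℝ) + k) ^ (1 - s) - (n : ℝ) ^ (1 - s)) / (1 - s)
        = ((n : ℝ) ^ (1 - s) - ((n : ℝ) + k) ^ (1 - s)) / (s - 1) := by
      rw [div_eq_div_iff (by linarith) (by linarith)]; ring
    rw [key]
    rw [div_le_div_iff₀ (by linarith) (by linarith)]
    nlinarith [hpos]

private lemma term_nonneg (m : ℕ) (α : ℝ) {lam : ℝ} (hlam : 0 < lam) {x : ℝ} (hx : 0 < x) :
    0 ≤ x ^ (2 * m) * x ^ (-(2 * α)) / (lam + x ^ (-(2 * α))) := by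
  have he : (0 : ℝ) < x ^ (-(2 * α)) := Real.rpow_pos_of_pos hx _
  have : (0 : ℝ) < lam + x ^ (-(2 * α)) := by linarith
  positivity

private lemma num_eq (m : ℕ) (α : ℝ) {x : ℝ} (hx : 0 < x) :
    x ^ (2 * m) * x ^ (-(2 * α)) = x ^ (2 * (m : ℝ) - 2 * α) := by
  rw [← Real.rpow_natCast x (2 * m), ← Real.rpow_add hx]
  congr 1
  push_cast
  ring

private lemma term_le_div (m : ℕ) (α : ℝ) {lam : ℝ} (hlam : 0 < lam) {x : ℝ} (hx : 0 < x) :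
    x ^ (2 * m) * x ^ (-(2 * α)) / (lam + x ^ (-(2 * α))) ≤ (1 / lam) * x ^ (2 * (m : ℝ) - 2 * α) := by
  have he : (0 : ℝ) < x ^ (-(2 * α)) := Real.rpow_pos_of_pos hx _
  rw [num_eq m α hx]
  have h1 : x ^ (2 * (m : ℝ) - 2 * α) / (lam + x ^ (-(2 * α))) ≤ x ^ (2 * (m : ℝ) - 2 * α) / lam :=
    div_le_div_of_nonneg_left (by positivity) hlam (by linarith)
  calc x ^ (2 * (m : ℝ) - 2 * α) / (lam + x ^ (-(2 * α))) ≤ x ^ (2 * (m : ℝ) - 2 * α) / lam := h1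
    _ = (1 / lam) * x ^ (2 * (m : ℝ) - 2 * α) := by ring

private lemma term_le_pow (m : ℕ) (α : ℝ) {lam : ℝ} (hlam : 0 < lam) {x : ℝ} (hx : 0 < x) :
    x ^ (2 * m) * x ^ (-(2 * α)) / (lam + x ^ (-(2 * α))) ≤ x ^ (2 * m) := by
  have he : (0 : ℝ) < x ^ (-(2 * α)) := Real.rpow_pos_of_pos hx _
  have h1 : x ^ (2 * m) * x ^ (-(2 * α)) / (lam + x ^ (-(2 * α)))
      ≤ x ^ (2 * m) * x ^ (-(2 * α)) / x ^ (-(2 * α)) :=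
    div_le_div_of_nonneg_left (by positivity) he (by linarith)
  calc x ^ (2 * m) * x ^ (-(2 * α)) / (lam + x ^ (-(2 * α)))
      ≤ x ^ (2 * m) * x ^ (-(2 * α)) / x ^ (-(2 * α)) := h1
    _ = x ^ (2 * m) := mul_div_cancel_right₀ _ (ne_of_gt he)

private lemma half_pow_le_term (m : ℕ) (α : ℝ) {lam : ℝ} (hlam : 0 < lam) {x : ℝ} (hx : 0 < x)
    (h : lam ≤ x ^ (-(2 * α))) :
    x ^ (2 * m) / 2 ≤ x ^ (2 * m) * x ^ (-(2 * α)) / (lam + x ^ (-(2 * α))) := by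
  have he : (0 : ℝ) < x ^ (-(2 * α)) := Real.rpow_pos_of_pos hx _
  have h1 : x ^ (2 * m) * x ^ (-(2 * α)) / (2 * x ^ (-(2 * α)))
      ≤ x ^ (2 * m) * x ^ (-(2 * α)) / (lam + x ^ (-(2 * α))) :=
    div_le_div_of_nonneg_left (by positivity) (by linarith) (by linarith)
  calc x ^ (2 * m) / 2 = x ^ (2 * m) * x ^ (-(2 * α)) / (2 * x ^ (-(2 * α))) := by
        field_simp
    _ ≤ _ := h1

set_option maxHeartbeats 1000000 in
/-- For fixed `m ∈ ℕ₀` and `α > m + 1/2`, the `m`-th order effective dimension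
`∑_{i=1}^∞ i^{2m} · i^{-2α}/(λ + i^{-2α})` (a convergent series for every `λ > 0`)
is of exact order `λ^{-(2m+1)/(2α)}` uniformly over `λ ∈ (0, 1]`. -/
theorem effective_dimension_polynomial_eigenvalues (m : ℕ) (α : ℝ)
    (hα : (m : ℝ) + 1 / 2 < α) :
    (∀ lam : ℝ, 0 < lam →
      Summable fun i : ℕ =>
        ((i : ℝ) + 1) ^ (2 * m) * ((i : ℝ) + 1) ^ (-(2 * α)) /
          (lam + ((i : ℝ) + 1) ^ (-(2 * α)))) ∧
    ∃ c C : ℝ, 0 < c ∧ 0 < C ∧ ∀ lam : ℝ, 0 < lam → lam ≤ 1 →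
      c * lam ^ (-(2 * (m : ℝ) + 1) / (2 * α)) ≤
        (∑' i : ℕ, ((i : ℝ) + 1) ^ (2 * m) * ((i : ℝ) + 1) ^ (-(2 * α)) /
          (lam + ((i : ℝ) + 1) ^ (-(2 * α)))) ∧
      (∑' i : ℕ, ((i : ℝ) + 1) ^ (2 * m) * ((i : ℝ) + 1) ^ (-(2 * α)) /
          (lam + ((i : ℝ) + 1) ^ (-(2 * α)))) ≤
        C * lam ^ (-(2 * (m : ℝ) + 1) / (2 * α)) := by
  have hm0 : (0 : ℝ) ≤ (m : ℝ) := Nat.cast_nonneg m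
  have hα0 : (0 : ℝ) < α := by linarith
  have hs : (1 : ℝ) < 2 * α - 2 * (m : ℝ) := by linarith
  set s : ℝ := 2 * α - 2 * (m : ℝ) with hs_def
  -- summability
  have hsummable : ∀ lam : ℝ, 0 < lam →
      Summable fun i : ℕ =>
        ((i : ℝ) + 1) ^ (2 * m) * ((i : ℝ) + 1) ^ (-(2 * α)) /
          (lam + ((i : ℝ) + 1) ^ (-(2 * α))) := by
    intro lam hlam
    have hp : (2 * (m : ℝ) - 2 * α) < -1 := by linarith
    have hg : Summable fun i : ℕ => ((i : ℝ) + 1) ^ (2 * (m : ℝ) - 2 * α) := by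
      have h0 : Summable fun n : ℕ => (n : ℝ) ^ (2 * (m : ℝ) - 2 * α) :=
        Real.summable_nat_rpow.mpr hp
      refine ((summable_nat_add_iff 1).mpr h0).congr fun i => ?_
      push_cast
      ring_nf
    refine Summable.of_nonneg_of_le (fun i => ?_) (fun i => ?_) (hg.mul_left (1 / lam))
    · exact term_nonneg m α hlam (by positivity)
    · exact term_le_div m α hlam (by positivity)
  refine ⟨hsummable, (1 / 2) * (1 / 4) ^ (2 * m + 1), 2 ^ (2 * m + 1) + 1 / (s - 1),
    by positivity,
    add_pos (by positivity) (one_div_pos.mpr (by linarith)), ?_⟩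
  intro lam hlam hlam1
  set N : ℝ := lam ^ (-1 / (2 * α)) with hN_def
  have hN0 : 0 < N := Real.rpow_pos_of_pos hlam _
  have hN1 : 1 ≤ N := by
    apply Real.one_le_rpow_of_pos_of_le_one_of_nonpos hlam hlam1
    exact div_nonpos_of_nonpos_of_nonneg (by norm_num) (by linarith)
  have htarget : lam ^ (-(2 * (m : ℝ) + 1) / (2 * α)) = N ^ (2 * m + 1) := by
    rw [← Real.rpow_natCast N (2 * m + 1), hN_def, ← Real.rpow_mul hlam.le]
    congr 1
    push_cast
    field_simp
  have hNlam : N ^ (-(2 * α)) = lam := by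
    rw [hN_def, ← Real.rpow_mul hlam.le]
    rw [show (-1 / (2 * α)) * (-(2 * α)) = 1 by field_simp]
    exact Real.rpow_one lam
  -- the floor
  set n : ℕ := ⌊N⌋₊ with hn_def
  have hn1 : 1 ≤ n := Nat.le_floor (by exact_mod_cast hN1)
  have hn1' : (1 : ℝ) ≤ (n : ℝ) := by exact_mod_cast hn1
  have hnN : (n : ℝ) ≤ N := Nat.floor_le hN0.le
  have hNn : N ≤ 2 * (n : ℝ) := by
    have := Nat.lt_floor_add_one N
    linarith
  have hsum := hsummable lam hlam
  clear_value N n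
  constructor
  · -- lower bound
    have hptwise : ∀ i ∈ Finset.range n, ((i : ℝ) + 1) ^ (2 * m) / 2 ≤
        ((i : ℝ) + 1) ^ (2 * m) * ((i : ℝ) + 1) ^ (-(2 * α)) /
          (lam + ((i : ℝ) + 1) ^ (-(2 * α))) := by
      intro i hi
      have hi' : (i : ℕ) + 1 ≤ n := Finset.mem_range.mp hi
      have hxN : (i : ℝ) + 1 ≤ N := by
        have : ((i : ℕ) : ℝ) + 1 ≤ (n : ℝ) := by exact_mod_cast hi'
        linarith
      apply half_pow_le_term m α hlam (by positivity)
      rw [← hNlam]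
      exact Real.rpow_le_rpow_of_nonpos (by positivity) hxN (by linarith)
    have h1 : ∑ i ∈ Finset.range n, ((i : ℝ) + 1) ^ (2 * m) / 2 ≤
        ∑' i : ℕ, ((i : ℝ) + 1) ^ (2 * m) * ((i : ℝ) + 1) ^ (-(2 * α)) /
          (lam + ((i : ℝ) + 1) ^ (-(2 * α))) := by
      refine le_trans (Finset.sum_le_sum hptwise) ?_
      exact Summable.sum_le_tsum _ (fun i _ => term_nonneg m α hlam (by positivity)) hsum
    have h2 : (1 / 2 : ℝ) * ((n : ℝ) / 2) ^ (2 * m + 1) ≤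
        ∑ i ∈ Finset.range n, ((i : ℝ) + 1) ^ (2 * m) / 2 := by
      rw [← Finset.sum_div]
      have := sum_pow_lower m n
      linarith
    have h3 : (1 / 2 : ℝ) * (1 / 4) ^ (2 * m + 1) * N ^ (2 * m + 1) ≤
        (1 / 2 : ℝ) * ((n : ℝ) / 2) ^ (2 * m + 1) := by
      have hb : N / 4 ≤ (n : ℝ) / 2 := by linarith
      have := pow_le_pow_left₀ (by positivity : (0:ℝ) ≤ N / 4) hb (2 * m + 1)
      have heq : (1 / 4 : ℝ) ^ (2 * m + 1) * N ^ (2 * m + 1) = (N / 4) ^ (2 * m + 1) := by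
        rw [← mul_pow]; congr 1; ring
      nlinarith [this, heq]
    rw [htarget]
    linarith [h1, h2, h3]
  · -- upper bound
    set n' : ℕ := n + 1 with hn'_def
    have hn'1 : 1 ≤ n' := by omega
    have hn'N : N ≤ (n' : ℝ) := by
      have h := Nat.lt_floor_add_one N
      rw [← hn_def] at h
      rw [hn'_def]
      push_cast
      linarith
    have hn'2N : (n' : ℝ) ≤ 2 * N := by
      rw [hn'_def]; push_cast; linarith
    have hn'pos : (0 : ℝ) < (n' : ℝ) := by linarith
    clear_value n'
    -- head bound
    have hhead : ∑ i ∈ Finset.range n', ((i : ℝ) + 1) ^ (2 * m) * ((i : ℝ) + 1) ^ (-(2 * α)) /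
          (lam + ((i : ℝ) + 1) ^ (-(2 * α))) ≤ 2 ^ (2 * m + 1) * N ^ (2 * m + 1) := by
      have hb : ∀ i ∈ Finset.range n',
          ((i : ℝ) + 1) ^ (2 * m) * ((i : ℝ) + 1) ^ (-(2 * α)) /
            (lam + ((i : ℝ) + 1) ^ (-(2 * α))) ≤ ((n' : ℝ)) ^ (2 * m) := by
        intro i hi
        have hi' : (i : ℕ) + 1 ≤ n' := Finset.mem_range.mp hi
        have hx : ((i : ℝ) + 1) ≤ (n' : ℝ) := by exact_mod_cast hi'
        exact le_trans (term_le_pow m α hlam (by positivity))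
          (pow_le_pow_left₀ (by positivity) hx _)
      calc ∑ i ∈ Finset.range n', ((i : ℝ) + 1) ^ (2 * m) * ((i : ℝ) + 1) ^ (-(2 * α)) /
            (lam + ((i : ℝ) + 1) ^ (-(2 * α)))
          ≤ (Finset.range n').card • ((n' : ℝ)) ^ (2 * m) := Finset.sum_le_card_nsmul _ _ _ hb
        _ = (n' : ℝ) ^ (2 * m + 1) := by
            rw [Finset.card_range, nsmul_eq_mul, pow_succ]
            ring
        _ ≤ (2 * N) ^ (2 * m + 1) := pow_le_pow_left₀ (by positivity) hn'2N _
        _ = 2 ^ (2 * m + 1) * N ^ (2 * m + 1) := mul_pow _ _ _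
    -- tail bound
    have hshift : Summable fun i : ℕ =>
        ((((i + n') : ℕ) : ℝ) + 1) ^ (2 * m) * ((((i + n') : ℕ) : ℝ) + 1) ^ (-(2 * α)) /
          (lam + ((((i + n') : ℕ) : ℝ) + 1) ^ (-(2 * α))) := (summable_nat_add_iff n').mpr hsum
    have hrp : Summable fun i : ℕ => (1 / lam) * ((n' : ℝ) + (i : ℝ) + 1) ^ (-s) := by
      apply Summable.mul_left
      have h0 : Summable fun k : ℕ => (k : ℝ) ^ (-s) :=
        Real.summable_nat_rpow.mpr (by linarith)
      refine ((summable_nat_add_iff (n' + 1)).mpr h0).congr fun i => ?_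
      push_cast
      ring_nf
    have htail1 : (∑' i : ℕ,
        ((((i + n') : ℕ) : ℝ) + 1) ^ (2 * m) * ((((i + n') : ℕ) : ℝ) + 1) ^ (-(2 * α)) /
          (lam + ((((i + n') : ℕ) : ℝ) + 1) ^ (-(2 * α))))
        ≤ ∑' i : ℕ, (1 / lam) * ((n' : ℝ) + (i : ℝ) + 1) ^ (-s) := by
      refine Summable.tsum_le_tsum (fun i => ?_) hshift hrp
      have hx : (0 : ℝ) < (((i + n') : ℕ) : ℝ) + 1 := by positivity
      refine le_trans (term_le_div m α hlam hx) (le_of_eq ?_)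
      rw [hs_def]
      congr 2 <;> push_cast <;> ring
    have htail3 := tail_rpow_bound hs n' hn'1
    have hstep : ((n' : ℝ)) ^ (1 - s) ≤ N ^ (1 - s) :=
      Real.rpow_le_rpow_of_nonpos hN0 hn'N (by linarith)
    have hNs : N ^ (1 - s) = N ^ (2 * m + 1) * lam := by
      rw [← hNlam, ← Real.rpow_natCast N (2 * m + 1), ← Real.rpow_add hN0]
      congr 1
      push_cast
      rw [hs_def]
      ring
    have hKnn : (0 : ℝ) ≤ (s - 1)⁻¹ := inv_nonneg.mpr (by linarith)
    have htail : (∑' i : ℕ,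
        ((((i + n') : ℕ) : ℝ) + 1) ^ (2 * m) * ((((i + n') : ℕ) : ℝ) + 1) ^ (-(2 * α)) /
          (lam + ((((i + n') : ℕ) : ℝ) + 1) ^ (-(2 * α))))
        ≤ N ^ (2 * m + 1) * (1 / (s - 1)) := by
      calc (∑' i : ℕ,
            ((((i + n') : ℕ) : ℝ) + 1) ^ (2 * m) * ((((i + n') : ℕ) : ℝ) + 1) ^ (-(2 * α)) /
              (lam + ((((i + n') : ℕ) : ℝ) + 1) ^ (-(2 * α))))
          ≤ ∑' i : ℕ, (1 / lam) * ((n' : ℝ) + (i : ℝ) + 1) ^ (-s) := htail1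
        _ = (1 / lam) * ∑' i : ℕ, ((n' : ℝ) + (i : ℝ) + 1) ^ (-s) := tsum_mul_left
        _ ≤ (1 / lam) * ((n' : ℝ) ^ (1 - s) / (s - 1)) :=
            mul_le_mul_of_nonneg_left htail3 (by positivity)
        _ = (1 / lam) * ((n' : ℝ) ^ (1 - s) * (s - 1)⁻¹) := by ring
        _ ≤ (1 / lam) * (N ^ (1 - s) * (s - 1)⁻¹) :=
            mul_le_mul_of_nonneg_left (mul_le_mul_of_nonneg_right hstep hKnn) (by positivity)
        _ = N ^ (2 * m + 1) * (1 / (s - 1)) := by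
            rw [hNs]
            field_simp
    rw [htarget, ← Summable.sum_add_tsum_nat_add n' hsum]
    calc (∑ i ∈ Finset.range n', ((i : ℝ) + 1) ^ (2 * m) * ((i : ℝ) + 1) ^ (-(2 * α)) /
            (lam + ((i : ℝ) + 1) ^ (-(2 * α)))) + (∑' i : ℕ,
        ((((i + n') : ℕ) : ℝ) + 1) ^ (2 * m) * ((((i + n') : ℕ) : ℝ) + 1) ^ (-(2 * α)) /
          (lam + ((((i + n') : ℕ) : ℝ) + 1) ^ (-(2 * α))))
        ≤ 2 ^ (2 * m + 1) * N ^ (2 * m + 1) + N ^ (2 * m + 1) * (1 / (s - 1)) :=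
          add_le_add hhead htail
      _ = (2 ^ (2 * m + 1) + 1 / (s - 1)) * N ^ (2 * m + 1) := by ring
end

section
/- Fix γ > 1/2 and m ∈ ℕ₀. There exists a constant C > 0, not depending on λ, such that for every λ ∈ (0, e^{-1}] and every positive integer i, i^{2m} ≤ C · (log(1/λ))^{2m} · (1 + λ e^{2γi}). -/
/-- Fix `γ > 1/2` and `m ∈ ℕ₀`. There is a constant `C > 0`, not depending
on `λ`, such that for every `λ ∈ (0, e^{-1}]` and every positive integer `i`,
`i^{2m} ≤ C (log(1/λ))^{2m} (1 + λ e^{2γi})`. -/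
theorem poly_le_log_pow_mul_exp (γ : ℝ) (hγ : 1 / 2 < γ) (m : ℕ) :
    ∃ C : ℝ, 0 < C ∧ ∀ lam : ℝ, 0 < lam → lam ≤ Real.exp (-1) →
      ∀ i : ℕ, 1 ≤ i →
        (i : ℝ) ^ (2 * m) ≤
          C * Real.log (1 / lam) ^ (2 * m) * (1 + lam * Real.exp (2 * γ * (i : ℝ))) := by
  set a : ℝ := 2 * γ - 1 with ha
  have ha0 : 0 < a := by simp only [ha]; linarith
  set C' : ℝ := (Nat.factorial (2 * m) : ℝ) / a ^ (2 * m) with hC'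
  have hC'0 : 0 < C' := div_pos (by positivity) (pow_pos ha0 _)
  refine ⟨C' + 1, by positivity, fun lam hlam hlame i hi => ?_⟩
  set L : ℝ := Real.log (1 / lam) with hL
  have hL1 : 1 ≤ L := by
    rw [hL, one_div, Real.log_inv, le_neg]
    calc Real.log lam ≤ Real.log (Real.exp (-1)) := Real.log_le_log hlam hlame
      _ = -1 := Real.log_exp _
  have hLpow : (1:ℝ) ≤ L ^ (2 * m) := one_le_pow₀ hL1
  have hi1 : (1:ℝ) ≤ (i:ℝ) := by exact_mod_cast hi
  have hexp_nonneg : 0 ≤ lam * Real.exp (2 * γ * i) := by positivity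
  rcases le_or_gt (i : ℝ) L with hcase | hcase
  · -- i ≤ L
    calc (i : ℝ) ^ (2 * m) ≤ L ^ (2 * m) := pow_le_pow_left₀ (by linarith) hcase _
      _ = 1 * L ^ (2 * m) * 1 := by ring
      _ ≤ (C' + 1) * L ^ (2 * m) * (1 + lam * Real.exp (2 * γ * i)) := by
          apply mul_le_mul (by nlinarith) (by linarith) zero_le_one (by positivity)
  · -- L < i
    have hlamL : lam = Real.exp (-L) := by
      rw [hL, one_div, Real.log_inv, neg_neg, Real.exp_log hlam]
    have key : (i : ℝ) ^ (2 * m) ≤ C' * (lam * Real.exp (2 * γ * i)) := by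
      have h1 : (a * i) ^ (2 * m) / (Nat.factorial (2 * m) : ℝ) ≤ Real.exp (a * i) :=
        Real.pow_div_factorial_le_exp (x := a * (i:ℝ)) (by positivity) (2 * m)
      have h2 : Real.exp (a * i) ≤ lam * Real.exp (2 * γ * i) := by
        rw [hlamL, ← Real.exp_add, Real.exp_le_exp, ha]
        nlinarith
      have hf : (0:ℝ) < (Nat.factorial (2 * m) : ℝ) := by positivity
      have h4 : (i:ℝ) ^ (2 * m) * a ^ (2 * m)
          ≤ (Nat.factorial (2 * m) : ℝ) * (lam * Real.exp (2 * γ * i)) := by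
        calc (i:ℝ) ^ (2 * m) * a ^ (2 * m) = (a * i) ^ (2 * m) := by rw [mul_pow]; ring
          _ = ((a * i) ^ (2 * m) / (Nat.factorial (2 * m) : ℝ)) * (Nat.factorial (2 * m) : ℝ) := by
              field_simp
          _ ≤ (lam * Real.exp (2 * γ * i)) * (Nat.factorial (2 * m) : ℝ) :=
              mul_le_mul_of_nonneg_right (h1.trans h2) hf.le
          _ = (Nat.factorial (2 * m) : ℝ) * (lam * Real.exp (2 * γ * i)) := by ring
      rw [hC', div_mul_eq_mul_div, le_div_iff₀ (pow_pos ha0 _)]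
      linarith
    have step1 : C' * (lam * Real.exp (2 * γ * i))
        ≤ (C' + 1) * (1 + lam * Real.exp (2 * γ * i)) := by nlinarith
    have step2 : (C' + 1) * (1 + lam * Real.exp (2 * γ * i))
        ≤ (C' + 1) * L ^ (2 * m) * (1 + lam * Real.exp (2 * γ * i)) := by
      have := mul_le_mul_of_nonneg_right hLpow
        (mul_nonneg (by positivity : (0:ℝ) ≤ C' + 1) (by positivity : (0:ℝ) ≤ 1 + lam * Real.exp (2 * γ * i)))
      nlinarith
    linarith
end

section
/- Fix γ > 1/2 and m ∈ ℕ₀, and for λ > 0 and j ∈ ℕ₀ set A_j(λ) = ∑_{i=1}^∞ i^{2j} e^{-2γi}/(λ + e^{-2γi}). There exists a constant C > 0, not depending on λ, such that for every λ ∈ (0, e^{-1}] and every real sequence (f_i)_{i≥1} with ∑_{i=1}^∞ f_i² (λ + e^{-2γi}) e^{2γi} < ∞, one has A_0(λ) · ∑_{i=1}^∞ f_i² i^{2m} ≤ C · A_m(λ) · ∑_{i=1}^∞ f_i² (λ + e^{-2γi}) e^{2γi}. -/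
/-- The `j`-th order effective dimension `A_j(λ) = ∑_{i=1}^∞ i^{2j} e^{-2γi}/(λ + e^{-2γi})`
for a kernel with exponentially decaying eigenvalues `μ_i = e^{-2γi}`. -/
noncomputable def expEffDim (γ lam : ℝ) (j : ℕ) : ℝ :=
  ∑' i : ℕ, ((i : ℝ) + 1) ^ (2 * j) * Real.exp (-2 * γ * ((i : ℝ) + 1)) /
    (lam + Real.exp (-2 * γ * ((i : ℝ) + 1)))

/-!
Write `λ = e^{-2γL}` with `L ≥ 0` and `w_i = μ_i / (λ + μ_i)`, so that `A_j = ∑ i^{2j} w_i` and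
the RKHS norm is `∑ f_i² / w_i`. Since `w_i ≤ min(1, e^{-2γ(i-L)})`, the weights are essentially
the indicator of `i ≤ L`: hence `A_0 ≲ L + 1`, `sup_i i^{2m} w_i ≲ (L + 1)^{2m}` and, as `w_i` is
bounded below for `i ≤ L + 1`, `A_m ≳ (L + 1)^{2m+1}`. The theorem follows from
`∑ f_i² i^{2m} ≤ (sup_i i^{2m} w_i) ∑ f_i² / w_i`.
-/

open Real Finset Nat

noncomputable def expEffDimWeight (γ lam : ℝ) (i : ℕ) : ℝ :=
  exp (-2 * γ * ((i : ℝ) + 1)) / (lam + exp (-2 * γ * ((i : ℝ) + 1)))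

lemma one_add_pow_mul_exp_neg_le {c s : ℝ} (hc : 0 < c) (hs : 0 ≤ s) (k : ℕ) :
    (1 + s) ^ k * exp (-(c * s)) ≤ k ! * exp c / c ^ k := by
  have h := pow_div_factorial_le_exp (c * (1 + s)) (by positivity) k
  rw [div_le_iff₀ (by positivity), mul_pow] at h
  rw [le_div_iff₀ (by positivity)]
  calc (1 + s) ^ k * exp (-(c * s)) * c ^ k = c ^ k * (1 + s) ^ k * exp (-(c * s)) := by ring
    _ ≤ exp (c * (1 + s)) * k ! * exp (-(c * s)) := by gcongr
    _ = k ! * exp c := by rw [mul_right_comm, ← exp_add]; ring_nf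

lemma pow_succ_div_le_sum_range_pow (k N : ℕ) :
    (N : ℝ) ^ (k + 1) / (k + 1) ≤ ∑ i ∈ range N, ((i : ℝ) + 1) ^ k := by
  have hmono : MonotoneOn (fun x : ℝ => x ^ k) (Set.Icc 0 (0 + N)) :=
    fun x hx y _ hxy => pow_le_pow_left₀ hx.1 hxy k
  simpa [integral_pow, add_comm] using hmono.integral_le_sum

lemma exists_eq_exp_neg_mul {γ lam : ℝ} (hγ : 0 < γ) (hlam : 0 < lam) (hlam_le : lam ≤ 1) :
    ∃ L, 0 ≤ L ∧ lam = exp (-2 * γ * L) := by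
  refine ⟨-log lam / (2 * γ), ?_, ?_⟩
  · exact div_nonneg (neg_nonneg.mpr (log_nonpos hlam.le hlam_le)) (by positivity)
  rw [show -2 * γ * (-log lam / (2 * γ)) = log lam by field_simp, exp_log hlam]

namespace expEffDimWeight

variable {γ lam : ℝ}

lemma nonneg (hlam : 0 ≤ lam) (i : ℕ) : 0 ≤ expEffDimWeight γ lam i := by
  unfold expEffDimWeight; positivity

lemma le_one (hlam : 0 ≤ lam) (i : ℕ) : expEffDimWeight γ lam i ≤ 1 :=
  div_le_one_of_le₀ (le_add_of_nonneg_left hlam) (by positivity)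

lemma le_div (hlam : 0 < lam) (i : ℕ) :
    expEffDimWeight γ lam i ≤ exp (-2 * γ * ((i : ℝ) + 1)) / lam :=
  div_le_div_of_nonneg_left (exp_pos _).le hlam (le_add_of_nonneg_right (exp_pos _).le)

lemma inv_eq (γ lam : ℝ) (i : ℕ) : (expEffDimWeight γ lam i)⁻¹ =
    (lam + exp (-2 * γ * ((i : ℝ) + 1))) * exp (2 * γ * ((i : ℝ) + 1)) := by
  rw [expEffDimWeight, inv_div, div_eq_mul_inv, ← exp_neg]
  ring_nf

lemma summable_pow_mul (hγ : 0 < γ) (hlam : 0 < lam) (k : ℕ) :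
    Summable fun i : ℕ => ((i : ℝ) + 1) ^ k * expEffDimWeight γ lam i := by
  have hμ : Summable fun i : ℕ => ((i : ℝ) + 1) ^ k * exp (-2 * γ * ((i : ℝ) + 1)) := by
    have h := summable_pow_mul_exp_neg_nat_mul k (by linarith : 0 < 2 * γ)
    simpa [neg_mul] using (summable_nat_add_iff 1).mpr h
  refine (hμ.div_const lam).of_nonneg_of_le
    (fun i => mul_nonneg (by positivity) (nonneg hlam.le i)) fun i => ?_
  rw [mul_div_assoc]
  exact mul_le_mul_of_nonneg_left (le_div hlam i) (by positivity)

lemma exp_le (γ L : ℝ) (i : ℕ) :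
    expEffDimWeight γ (exp (-2 * γ * L)) i ≤ exp (-2 * γ * ((i : ℝ) + 1 - L)) := by
  refine (le_div (exp_pos _) i).trans_eq ?_
  rw [← exp_sub]
  ring_nf

lemma inv_one_add_exp_le (hγ : 0 ≤ γ) {L : ℝ} {i : ℕ} (hi : (i : ℝ) ≤ L) :
    (1 + exp (2 * γ))⁻¹ ≤ expEffDimWeight γ (exp (-2 * γ * L)) i := by
  have hlam : exp (-2 * γ * L) ≤ exp (-2 * γ * ((i : ℝ) + 1)) * exp (2 * γ) := by
    rw [← exp_add]
    exact exp_le_exp.mpr (by nlinarith)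
  rw [expEffDimWeight, inv_eq_one_div, div_le_div_iff₀ (by positivity) (by positivity)]
  linarith

lemma pow_mul_exp_le (hγ : 0 < γ) {L : ℝ} (hL : 0 ≤ L) (k i : ℕ) :
    ((i : ℝ) + 1) ^ k * expEffDimWeight γ (exp (-2 * γ * L)) i ≤
      k ! * exp (2 * γ) / (2 * γ) ^ k * (L + 1) ^ k := by
  set s := max ((i : ℝ) + 1 - L) 0
  have hs : 0 ≤ s := le_max_right _ _
  have hw : expEffDimWeight γ (exp (-2 * γ * L)) i ≤ exp (-(2 * γ * s)) := by
    rcases le_total ((i : ℝ) + 1 - L) 0 with h | h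
    · simpa [s, max_eq_right h] using le_one (exp_pos _).le i
    · simp only [s, max_eq_left h]
      convert exp_le γ L i using 2
      ring
  have hi : (i : ℝ) + 1 ≤ (L + 1) * (1 + s) := by nlinarith [le_max_left ((i : ℝ) + 1 - L) 0]
  calc ((i : ℝ) + 1) ^ k * expEffDimWeight γ (exp (-2 * γ * L)) i
      ≤ ((L + 1) * (1 + s)) ^ k * exp (-(2 * γ * s)) :=
        mul_le_mul (pow_le_pow_left₀ (by positivity) hi k) hw (nonneg (exp_pos _).le i)
          (by positivity)
    _ = (L + 1) ^ k * ((1 + s) ^ k * exp (-(2 * γ * s))) := by rw [mul_pow, mul_assoc]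
    _ ≤ (L + 1) ^ k * (k ! * exp (2 * γ) / (2 * γ) ^ k) := by
      gcongr
      exact one_add_pow_mul_exp_neg_le (by positivity) hs k
    _ = _ := mul_comm _ _

end expEffDimWeight

section

variable {γ : ℝ}

lemma expEffDim_eq_tsum (γ lam : ℝ) (j : ℕ) :
    expEffDim γ lam j = ∑' i : ℕ, ((i : ℝ) + 1) ^ (2 * j) * expEffDimWeight γ lam i := by
  simp only [expEffDim, expEffDimWeight, mul_div_assoc]

lemma expEffDim_zero_exp_le (hγ : 0 < γ) {L : ℝ} (hL : 0 ≤ L) :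
    expEffDim γ (exp (-2 * γ * L)) 0 ≤ L + 1 + (1 - exp (-(2 * γ)))⁻¹ := by
  set w := expEffDimWeight γ (exp (-2 * γ * L))
  set N := ⌈L⌉₊
  have hr : exp (-(2 * γ)) < 1 := exp_lt_one_iff.mpr (by linarith)
  have hw : Summable w := by simpa using expEffDimWeight.summable_pow_mul hγ (exp_pos _) 0
  have head : ∑ i ∈ range N, w i ≤ L + 1 := calc
    ∑ i ∈ range N, w i ≤ ∑ _i ∈ range N, (1 : ℝ) :=
      sum_le_sum fun i _ => expEffDimWeight.le_one (exp_pos _).le i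
    _ = N := by simp
    _ ≤ L + 1 := (ceil_lt_add_one hL).le
  have tail : ∑' i, w (i + N) ≤ (1 - exp (-(2 * γ)))⁻¹ := by
    rw [← tsum_geometric_of_lt_one (exp_nonneg _) hr]
    refine ((summable_nat_add_iff N).mpr hw).tsum_le_tsum (fun i => ?_)
      (summable_geometric_of_lt_one (exp_nonneg _) hr)
    refine (expEffDimWeight.exp_le γ L _).trans ?_
    rw [← exp_nat_mul]
    exact exp_le_exp.mpr (by push_cast; nlinarith [le_ceil L])
  have hA : expEffDim γ (exp (-2 * γ * L)) 0 = ∑' i, w i := by simp [expEffDim_eq_tsum, w]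
  rw [hA, ← hw.sum_add_tsum_nat_add N]
  exact add_le_add head tail

lemma le_expEffDim_exp (hγ : 0 < γ) {L : ℝ} (hL : 0 ≤ L) (j : ℕ) :
    (L + 1) ^ (2 * j + 1) / (2 ^ (2 * j + 1) * (2 * j + 1) * (1 + exp (2 * γ))) ≤
      expEffDim γ (exp (-2 * γ * L)) j := by
  set w := expEffDimWeight γ (exp (-2 * γ * L))
  set N := ⌊L⌋₊ + 1
  have hN : (L + 1) / 2 ≤ N := by
    have := lt_floor_add_one L
    have : (1 : ℝ) ≤ N := by simp [N]
    push_cast [N] at *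
    linarith
  have hw : ∀ i ∈ range N, (1 + exp (2 * γ))⁻¹ ≤ w i := fun i hi =>
    expEffDimWeight.inv_one_add_exp_le hγ.le
      ((le_floor_iff hL).mp (Nat.lt_add_one_iff.mp (mem_range.mp hi)))
  have hsum := pow_succ_div_le_sum_range_pow (2 * j) N
  push_cast at hsum
  calc (L + 1) ^ (2 * j + 1) / (2 ^ (2 * j + 1) * (2 * j + 1) * (1 + exp (2 * γ)))
      = ((L + 1) / 2) ^ (2 * j + 1) / (2 * j + 1) * (1 + exp (2 * γ))⁻¹ := by
        rw [div_pow]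
        field_simp
    _ ≤ (N : ℝ) ^ (2 * j + 1) / (2 * j + 1) * (1 + exp (2 * γ))⁻¹ := by gcongr
    _ ≤ (∑ i ∈ range N, ((i : ℝ) + 1) ^ (2 * j)) * (1 + exp (2 * γ))⁻¹ := by gcongr
    _ = ∑ i ∈ range N, ((i : ℝ) + 1) ^ (2 * j) * (1 + exp (2 * γ))⁻¹ := sum_mul _ _ _
    _ ≤ ∑ i ∈ range N, ((i : ℝ) + 1) ^ (2 * j) * w i :=
      sum_le_sum fun i hi => by gcongr; exact hw i hi
    _ ≤ ∑' i : ℕ, ((i : ℝ) + 1) ^ (2 * j) * w i :=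
      (expEffDimWeight.summable_pow_mul hγ (exp_pos _) _).sum_le_tsum _
        fun i _ => mul_nonneg (by positivity) (expEffDimWeight.nonneg (exp_pos _).le i)
    _ = _ := (expEffDim_eq_tsum _ _ _).symm

lemma tsum_sq_mul_pow_le {lam B : ℝ} (hlam : 0 < lam) {k : ℕ}
    (hB : ∀ i : ℕ, ((i : ℝ) + 1) ^ k * expEffDimWeight γ lam i ≤ B) (f : ℕ → ℝ)
    (hf : Summable fun i : ℕ =>
      f i ^ 2 * (lam + exp (-2 * γ * ((i : ℝ) + 1))) * exp (2 * γ * ((i : ℝ) + 1))) :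
    ∑' i, f i ^ 2 * ((i : ℝ) + 1) ^ k ≤
      B * ∑' i, f i ^ 2 * (lam + exp (-2 * γ * ((i : ℝ) + 1))) *
        exp (2 * γ * ((i : ℝ) + 1)) := by
  have hle : ∀ i : ℕ, f i ^ 2 * ((i : ℝ) + 1) ^ k ≤
      B * (f i ^ 2 * (lam + exp (-2 * γ * ((i : ℝ) + 1))) * exp (2 * γ * ((i : ℝ) + 1))) := by
    intro i
    have hw : 0 < expEffDimWeight γ lam i := by unfold expEffDimWeight; positivity
    rw [mul_assoc (f i ^ 2), ← expEffDimWeight.inv_eq, mul_comm B]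
    calc f i ^ 2 * ((i : ℝ) + 1) ^ k
        = f i ^ 2 * (expEffDimWeight γ lam i)⁻¹ *
            (((i : ℝ) + 1) ^ k * expEffDimWeight γ lam i) := by
          field_simp
      _ ≤ _ := by gcongr; exact hB i
  rw [← tsum_mul_left]
  exact ((hf.mul_left B).of_nonneg_of_le (fun i => by positivity) hle).tsum_le_tsum hle
    (hf.mul_left B)

end

/-- Fix `γ > 1/2` and `m ∈ ℕ₀`. There exists `C > 0`, not depending on `λ`,
such that for every `λ ∈ (0, e^{-1}]` and every real sequence `(f_i)` with
`∑ f_i² (λ + e^{-2γi}) e^{2γi} < ∞`, one has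
`A_0(λ) ∑ f_i² i^{2m} ≤ C A_m(λ) ∑ f_i² (λ + e^{-2γi}) e^{2γi}`. -/
theorem deriv_norm_le_effdim_ratio_mul_rkhs_norm (γ : ℝ) (hγ : 1 / 2 < γ) (m : ℕ) :
    ∃ C : ℝ, 0 < C ∧ ∀ lam : ℝ, 0 < lam → lam ≤ Real.exp (-1) →
      ∀ f : ℕ → ℝ,
        (Summable fun i : ℕ =>
          f i ^ 2 * (lam + Real.exp (-2 * γ * ((i : ℝ) + 1))) *
            Real.exp (2 * γ * ((i : ℝ) + 1))) →
        expEffDim γ lam 0 * (∑' i : ℕ, f i ^ 2 * ((i : ℝ) + 1) ^ (2 * m)) ≤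
          C * expEffDim γ lam m *
            (∑' i : ℕ, f i ^ 2 * (lam + Real.exp (-2 * γ * ((i : ℝ) + 1))) *
              Real.exp (2 * γ * ((i : ℝ) + 1))) := by
  have hγ0 : 0 < γ := by linarith
  set B := (2 * m)! * exp (2 * γ) / (2 * γ) ^ (2 * m)
  set D := (1 - exp (-(2 * γ)))⁻¹
  set c := 2 ^ (2 * m + 1) * (2 * m + 1) * (1 + exp (2 * γ))
  have hD : 0 < D := inv_pos.mpr (sub_pos.mpr (exp_lt_one_iff.mpr (by linarith)))
  refine ⟨(1 + D) * B * c, by positivity, fun lam hlam hlam_le f hf => ?_⟩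
  obtain ⟨L, hL, rfl⟩ :=
    exists_eq_exp_neg_mul hγ0 hlam (hlam_le.trans (exp_le_one_iff.mpr (by norm_num)))
  have hnorm :=
    tsum_sq_mul_pow_le (exp_pos _) (expEffDimWeight.pow_mul_exp_le hγ0 hL (2 * m)) f hf
  have hA0 := expEffDim_zero_exp_le hγ0 hL
  have hAm := le_expEffDim_exp hγ0 hL m
  set R := ∑' i : ℕ, f i ^ 2 * (exp (-2 * γ * L) + exp (-2 * γ * ((i : ℝ) + 1))) *
      exp (2 * γ * ((i : ℝ) + 1))
  have hc : 0 < c := by positivity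
  calc expEffDim γ (exp (-2 * γ * L)) 0 * ∑' i : ℕ, f i ^ 2 * ((i : ℝ) + 1) ^ (2 * m)
      ≤ (1 + D) * (L + 1) * (B * (L + 1) ^ (2 * m) * R) := by
        refine mul_le_mul (hA0.trans ?_) hnorm (by positivity) (by positivity)
        nlinarith
    _ = (1 + D) * B * c * ((L + 1) ^ (2 * m + 1) / c) * R := by
        field_simp
        ring
    _ ≤ (1 + D) * B * c * expEffDim γ (exp (-2 * γ * L)) m * R := by gcongr
end

section
/- Let γ₀ > γ > 0, let k ∈ ℕ₀, let c₂ ≥ c₁ > 0, and let (μ_i)_{i≥1} be positive reals with c₁ e^{-2γi} ≤ μ_i ≤ c₂ e^{-2γi} for all i. Let (f_i)_{i≥1} be a real sequence with ∑_{i=1}^∞ e^{γ₀ i} |f_i| < ∞. Then there exists a constant C > 0 (depending on γ, γ₀, k, c₁, c₂ and the sequence (f_i) but not on λ) such that for every λ ∈ (0, 1], ∑_{i=1}^∞ (λ/(λ + μ_i)) · |f_i| · i^k ≤ C √λ. -/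
/-- Let `γ₀ > γ > 0`, `k ∈ ℕ₀`, `c₂ ≥ c₁ > 0`, and let `(μ_i)` be positive
reals with `c₁ e^{-2γi} ≤ μ_i ≤ c₂ e^{-2γi}`. If `∑ e^{γ₀ i}|f_i| < ∞` then there is a
constant `C > 0` (independent of `λ`) such that for every `λ ∈ (0,1]`,
`∑ (λ/(λ+μ_i)) |f_i| i^k ≤ C √λ`. -/
theorem bias_bound_exponential_eigenvalues (γ γ₀ : ℝ) (hγ : 0 < γ) (hγγ₀ : γ < γ₀)
    (k : ℕ) (c₁ c₂ : ℝ) (hc₁ : 0 < c₁) (hc₁₂ : c₁ ≤ c₂)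
    (μs : ℕ → ℝ) (hμpos : ∀ i, 0 < μs i)
    (hμ : ∀ i : ℕ, c₁ * Real.exp (-2 * γ * ((i : ℝ) + 1)) ≤ μs i ∧
      μs i ≤ c₂ * Real.exp (-2 * γ * ((i : ℝ) + 1)))
    (f : ℕ → ℝ) (hf : Summable fun i : ℕ => Real.exp (γ₀ * ((i : ℝ) + 1)) * |f i|) :
    ∃ C : ℝ, 0 < C ∧ ∀ lam : ℝ, 0 < lam → lam ≤ 1 →
      ∑' i : ℕ, lam / (lam + μs i) * |f i| * ((i : ℝ) + 1) ^ k ≤ C * Real.sqrt lam := by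
  set δ : ℝ := γ₀ - γ with hδ
  have hδpos : 0 < δ := by simp only [hδ]; linarith
  set K : ℝ := (k.factorial : ℝ) / δ ^ k with hK
  set g : ℕ → ℝ := fun i => Real.exp (γ * ((i : ℝ) + 1)) * |f i| * ((i : ℝ) + 1) ^ k with hg
  have hgnonneg : ∀ i, 0 ≤ g i := fun i => by positivity
  have hgle : ∀ i, g i ≤ K * (Real.exp (γ₀ * ((i : ℝ) + 1)) * |f i|) := by
    intro i
    have hx : (0:ℝ) ≤ δ * ((i : ℝ) + 1) := by positivity
    have h1 : (δ * ((i : ℝ) + 1)) ^ k / (k.factorial : ℝ) ≤ Real.exp (δ * ((i : ℝ) + 1)) :=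
      Real.pow_div_factorial_le_exp _ hx k
    have h2 : ((i : ℝ) + 1) ^ k ≤ K * Real.exp (δ * ((i : ℝ) + 1)) := by
      rw [hK, div_mul_eq_mul_div, le_div_iff₀ (by positivity : (0:ℝ) < δ ^ k)]
      have h3 := (div_le_iff₀ (by positivity : (0:ℝ) < (k.factorial : ℝ))).mp h1
      calc ((i : ℝ) + 1) ^ k * δ ^ k = (δ * ((i : ℝ) + 1)) ^ k := by rw [mul_pow]; ring
        _ ≤ Real.exp (δ * ((i : ℝ) + 1)) * (k.factorial : ℝ) := h3
        _ = (k.factorial : ℝ) * Real.exp (δ * ((i : ℝ) + 1)) := by ring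
    have hexp : Real.exp (γ * ((i : ℝ) + 1)) * Real.exp (δ * ((i : ℝ) + 1))
        = Real.exp (γ₀ * ((i : ℝ) + 1)) := by
      rw [← Real.exp_add]; congr 1; rw [hδ]; ring
    calc g i ≤ Real.exp (γ * ((i : ℝ) + 1)) * |f i| * (K * Real.exp (δ * ((i : ℝ) + 1))) :=
          mul_le_mul_of_nonneg_left h2 (by positivity)
      _ = K * (Real.exp (γ * ((i : ℝ) + 1)) * Real.exp (δ * ((i : ℝ) + 1)) * |f i|) := by ring
      _ = K * (Real.exp (γ₀ * ((i : ℝ) + 1)) * |f i|) := by rw [hexp]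
  have hgsum : Summable g :=
    Summable.of_nonneg_of_le hgnonneg hgle (hf.mul_left K)
  set S : ℝ := ∑' i, g i with hS
  have hSnn : 0 ≤ S := tsum_nonneg hgnonneg
  refine ⟨S / Real.sqrt c₁ + 1, by positivity, fun lam hlam hlam1 => ?_⟩
  have hsqlam : 0 < Real.sqrt lam := Real.sqrt_pos.mpr hlam
  have hsqc : 0 < Real.sqrt c₁ := Real.sqrt_pos.mpr hc₁
  have hterm : ∀ i, lam / (lam + μs i) * |f i| * ((i : ℝ) + 1) ^ k
      ≤ Real.sqrt lam / Real.sqrt c₁ * g i := by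
    intro i
    have hμipos := hμpos i
    have hμsq : 0 < Real.sqrt (μs i) := Real.sqrt_pos.mpr hμipos
    have h1 : lam / (lam + μs i) ≤ Real.sqrt lam / Real.sqrt (μs i) := by
      rw [div_le_div_iff₀ (by linarith) hμsq]
      have heq : lam * Real.sqrt (μs i) = Real.sqrt lam * (Real.sqrt lam * Real.sqrt (μs i)) := by
        rw [← mul_assoc, Real.mul_self_sqrt hlam.le]
      rw [heq]
      refine mul_le_mul_of_nonneg_left ?_ hsqlam.le
      calc Real.sqrt lam * Real.sqrt (μs i) = Real.sqrt (lam * μs i) :=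
            (Real.sqrt_mul hlam.le _).symm
        _ ≤ Real.sqrt ((lam + μs i) ^ 2) := Real.sqrt_le_sqrt (by nlinarith)
        _ = lam + μs i := Real.sqrt_sq (by positivity)
    -- 1/√μ ≤ exp(γ(i+1))/√c₁
    have h2 : Real.sqrt lam / Real.sqrt (μs i)
        ≤ Real.sqrt lam / Real.sqrt c₁ * Real.exp (γ * ((i : ℝ) + 1)) := by
      have hlow : Real.sqrt c₁ * Real.exp (-(γ * ((i : ℝ) + 1))) ≤ Real.sqrt (μs i) := by
        have := (hμ i).1
        have : Real.sqrt (c₁ * Real.exp (-2 * γ * ((i : ℝ) + 1))) ≤ Real.sqrt (μs i) :=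
          Real.sqrt_le_sqrt (hμ i).1
        rwa [Real.sqrt_mul hc₁.le, ← Real.exp_half, show (-2 * γ * ((i : ℝ) + 1)) / 2
          = -(γ * ((i : ℝ) + 1)) by ring] at this
      have hpos : 0 < Real.sqrt c₁ * Real.exp (-(γ * ((i : ℝ) + 1))) := by positivity
      calc Real.sqrt lam / Real.sqrt (μs i)
          ≤ Real.sqrt lam / (Real.sqrt c₁ * Real.exp (-(γ * ((i : ℝ) + 1)))) :=
            div_le_div_of_nonneg_left hsqlam.le hpos hlow
        _ = Real.sqrt lam / Real.sqrt c₁ * Real.exp (γ * ((i : ℝ) + 1)) := by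
            rw [Real.exp_neg]; field_simp
    have h3 : lam / (lam + μs i) ≤ Real.sqrt lam / Real.sqrt c₁ * Real.exp (γ * ((i : ℝ) + 1)) :=
      h1.trans h2
    calc lam / (lam + μs i) * |f i| * ((i : ℝ) + 1) ^ k
        ≤ Real.sqrt lam / Real.sqrt c₁ * Real.exp (γ * ((i : ℝ) + 1)) * |f i| * ((i : ℝ) + 1) ^ k :=
          mul_le_mul_of_nonneg_right (mul_le_mul_of_nonneg_right h3 (abs_nonneg _))
            (by positivity)
      _ = Real.sqrt lam / Real.sqrt c₁ * g i := by rw [hg]; ring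
  have htermnn : ∀ i, 0 ≤ lam / (lam + μs i) * |f i| * ((i : ℝ) + 1) ^ k := by
    intro i; have := hμpos i; positivity
  have hlsum : Summable fun i => lam / (lam + μs i) * |f i| * ((i : ℝ) + 1) ^ k :=
    Summable.of_nonneg_of_le htermnn hterm (hgsum.mul_left _)
  calc ∑' i : ℕ, lam / (lam + μs i) * |f i| * ((i : ℝ) + 1) ^ k
      ≤ ∑' i : ℕ, Real.sqrt lam / Real.sqrt c₁ * g i :=
        Summable.tsum_le_tsum hterm hlsum (hgsum.mul_left _)
    _ = Real.sqrt lam / Real.sqrt c₁ * S := by rw [tsum_mul_left]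
    _ = S / Real.sqrt c₁ * Real.sqrt lam := by ring
    _ ≤ (S / Real.sqrt c₁ + 1) * Real.sqrt lam := by nlinarith
end
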